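/- arXiv:1501.06942 — 2 statements merged into one kernel-verified Lean document; each statement's English description precedes it below -/
import Mathlib

section
/- Let G be a finite connected bipartite simple graph, let w_1,...,w_k (k >= 1) be distinct vertices of G (called sources), and let d : {w_1,...,w_k} -> Z be a function of delays satisfying: (DS1) min_i d(w_i) = 0; (DS2) |d(w_i) - d(w_j)| < d_G(w_i,w_j) for all 1 <= i < j <= k; (DS3) d(w_i) - d(w_j) + d_G(w_i,w_j) is even for all 1 <= i < j <= k. Define the distance from delayed sources l^d : V(G) -> Z by l^d(v) = min_{1 <= i <= k} ( d_G(v,w_i) + d(w_i) ). Then for every pair of adjacent vertices v, w of G one has |l^d(v) - l^d(w)| = 1. -/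
private lemma z2_self : ∀ a : ZMod 2, (0 : ZMod 2) = a + a := by decide

private lemma z2_ne : ∀ a b : ZMod 2, a ≠ b → a + b = 1 := by decide

private lemma z2_cons : ∀ a b c : ZMod 2, a + b = 1 → b + c + 1 = a + c := by decide

private lemma z2_helper : ∀ a b c d e : ZMod 2,
    a - b + (c + d) = 0 → e + c + a = e + (d + b) := by decide

private lemma z2_sub : ∀ a b e : ZMod 2, a ≠ b → a + e - (b + e) = 1 := by decide

/-- Let `G` be a finite connected bipartite simple graph with
distinct sources `w 0, …, w (k-1)` (`k ≥ 1`) and delays `d : Fin k → ℤ` satisfying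
(DS1) `min_i d i = 0`, (DS2) `|d i - d j| < dist (w i) (w j)` for `i ≠ j`, and
(DS3) `d i - d j + dist (w i) (w j)` is even for `i ≠ j`.  Then the distance from
the delayed sources, `ℓᵈ(v) = min_i (dist v (w i) + d i)`, changes by exactly `1`
along every edge of `G`. -/
theorem stmt_1 {V : Type*} [Fintype V] (G : SimpleGraph V) (hconn : G.Connected)
    (hbip : G.Colorable 2) (k : ℕ) (hk : 1 ≤ k) (w : Fin k → V)
    (hw : Function.Injective w) (d : Fin k → ℤ)
    (hDS1 : Finset.univ.inf' ⟨⟨0, hk⟩, Finset.mem_univ _⟩ d = 0)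
    (hDS2 : ∀ i j : Fin k, i ≠ j → |d i - d j| < (G.dist (w i) (w j) : ℤ))
    (hDS3 : ∀ i j : Fin k, i ≠ j → Even (d i - d j + (G.dist (w i) (w j) : ℤ)))
    (ld : V → ℤ)
    (hld : ∀ v : V, ld v = Finset.univ.inf' ⟨⟨0, hk⟩, Finset.mem_univ _⟩
      (fun i => (G.dist v (w i) : ℤ) + d i)) :
    ∀ v u : V, G.Adj v u → |ld v - ld u| = 1 := by
  obtain ⟨C⟩ := hbip
  let f : V → ZMod 2 := fun v => (C v : ZMod 2)
  have hfne : ∀ {x y : V}, G.Adj x y → f x ≠ f y := fun h => C.valid h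
  -- parity of walk lengths
  have hwalk : ∀ (x y : V) (p : G.Walk x y), (p.length : ZMod 2) = f x + f y := by
    intro x y p
    induction p with
    | nil =>
      simp only [SimpleGraph.Walk.length_nil, Nat.cast_zero]
      exact z2_self _
    | @cons a b c h q ih =>
      rw [SimpleGraph.Walk.length_cons]
      push_cast
      rw [ih]
      exact z2_cons (f a) (f b) (f c) (z2_ne _ _ (hfne h))
  -- parity of distances
  have hdistp : ∀ x y : V, ((G.dist x y : ℕ) : ZMod 2) = f x + f y := by
    intro x y
    obtain ⟨p, hp⟩ := (hconn x y).exists_walk_length_eq_dist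
    rw [← hp]; exact hwalk x y p
  set i0 : Fin k := ⟨0, hk⟩ with hi0
  set e : ZMod 2 := f (w i0) + ((d i0 : ℤ) : ZMod 2) with he
  -- parity of each candidate value
  have hpar : ∀ (x : V) (i : Fin k),
      (((G.dist x (w i) : ℤ) + d i : ℤ) : ZMod 2) = f x + e := by
    intro x i
    rw [he]
    push_cast
    rw [hdistp]
    by_cases hi : i = i0
    · subst hi; ring
    · have h3' : (((d i - d i0 + (G.dist (w i) (w i0) : ℤ)) : ℤ) : ZMod 2) = 0 := by
        rw [ZMod.intCast_zmod_eq_zero_iff_dvd]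
        exact (hDS3 i i0 hi).two_dvd
      push_cast at h3'
      rw [hdistp] at h3'
      exact z2_helper _ _ _ _ _ h3'
  -- parity of ld
  have hparld : ∀ x : V, ((ld x : ℤ) : ZMod 2) = f x + e := by
    intro x
    obtain ⟨j, -, hj⟩ := Finset.exists_mem_eq_inf' (α := ℤ)
      ⟨(⟨0, hk⟩ : Fin k), Finset.mem_univ _⟩ (fun i => (G.dist x (w i) : ℤ) + d i)
    rw [hld x, hj]
    exact hpar x j
  -- the one-step bound
  have hle : ∀ x y : V, G.Adj x y → ld x ≤ ld y + 1 := by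
    intro x y hxy
    obtain ⟨j, -, hj⟩ := Finset.exists_mem_eq_inf' (α := ℤ)
      ⟨(⟨0, hk⟩ : Fin k), Finset.mem_univ _⟩ (fun i => (G.dist y (w i) : ℤ) + d i)
    have hx : ld x ≤ (G.dist x (w j) : ℤ) + d j := by
      rw [hld x]
      exact Finset.inf'_le _ (Finset.mem_univ j)
    have htri : G.dist x (w j) ≤ G.dist x y + G.dist y (w j) := hconn.dist_triangle
    have h1 : G.dist x y = 1 := SimpleGraph.dist_eq_one_iff_adj.mpr hxy
    have : (G.dist x (w j) : ℤ) ≤ 1 + (G.dist y (w j) : ℤ) := by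
      have : G.dist x (w j) ≤ 1 + G.dist y (w j) := by omega
      exact_mod_cast this
    rw [hld y, hj]
    linarith
  -- conclude
  intro v u hvu
  have hodd : ((ld v - ld u : ℤ) : ZMod 2) = 1 := by
    push_cast
    rw [hparld v, hparld u]
    exact z2_sub _ _ _ (hfne hvu)
  have hne : ld v - ld u ≠ 0 := by
    intro h0
    rw [h0] at hodd
    simp at hodd
  have h1 := hle v u hvu
  have h2 := hle u v hvu.symm
  rw [abs_eq (by norm_num : (0:ℤ) ≤ 1)]
  omega
end

section
/- Define T : (0, 1/12] -> R by T(t) = (1 - sqrt(1 - 12t)) / (6t), and define U : (0, 1/12] -> R by U(t) = ( (1 - t*T(t)^2) - sqrt( (1 - t*T(t)^2)^2 - 4*t^2*T(t)^4 ) ) / ( 2*t*T(t)^2 ). Then the limit, as t tends to 1/12 from the left, of (1 - U(t)) / (1 - 12t)^{1/4} equals sqrt(6). -/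
/-- The branch `T(t) = (1 - √(1 - 12t)) / (6t)` of the equation `T = 1 + 3tT²`. -/
noncomputable def Tfun (t : ℝ) : ℝ := (1 - Real.sqrt (1 - 12 * t)) / (6 * t)

/-- The branch `U(t)` of the equation `U = tT²(1 + U + U²)` vanishing at `0⁺`. -/
noncomputable def Ufun (t : ℝ) : ℝ :=
  ((1 - t * Tfun t ^ 2) -
      Real.sqrt ((1 - t * Tfun t ^ 2) ^ 2 - 4 * t ^ 2 * Tfun t ^ 4)) /
    (2 * t * Tfun t ^ 2)

/-!
In the variable `s = √(1 - 12t)` everything becomes explicit: `tT² = (1 - s) / (3(1 + s))`,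
the discriminant of the quadratic for `U` is `s (8 + 4s) / (3(1 + s)²)`, and hence
`1 - U = √s · φ(s)` with `φ(s) = 3(√((8 + 4s)/3) - 2√s) / (2(1 - s))`.
Since `(1 - 12t)^{1/4} = √s` and `φ` is continuous at `0` with `φ(0) = √6`, the limit follows.
-/

open Filter Topology Real

/-- The function `φ` with `1 - U(t) = √s · φ(s)` for `s = √(1 - 12t)`. -/
noncomputable def gapRatio (s : ℝ) : ℝ :=
  3 * (√((8 + 4 * s) / 3) - 2 * √s) / (2 * (1 - s))

lemma gapRatio_zero : gapRatio 0 = √6 := by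
  have h : ((8 : ℝ) + 4 * 0) / 3 = (2 / 3) ^ 2 * 6 := by norm_num
  rw [gapRatio, h, sqrt_mul (by positivity), sqrt_sq (by norm_num), sqrt_zero]
  ring

lemma continuousAt_gapRatio_zero : ContinuousAt gapRatio 0 :=
  ContinuousAt.div (by fun_prop) (by fun_prop) (by norm_num)

/-- The smaller root `x` of `a x² + (a - 1) x + a = 0`, seen from `1`. -/
lemma one_sub_smaller_root {a : ℝ} (ha : a ≠ 0) :
    1 - ((1 - a) - √((1 - a) ^ 2 - 4 * a ^ 2)) / (2 * a) =
      (√((1 - 3 * a) * (1 + a)) - (1 - 3 * a)) / (2 * a) := by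
  rw [show (1 - a) ^ 2 - 4 * a ^ 2 = (1 - 3 * a) * (1 + a) by ring]
  field_simp
  ring

lemma mul_Tfun_sq {t : ℝ} (ht : t ≠ 0) (ht' : t ≤ 1 / 12) :
    t * Tfun t ^ 2 = (1 - √(1 - 12 * t)) / (3 * (1 + √(1 - 12 * t))) := by
  have hs : √(1 - 12 * t) ^ 2 = 1 - 12 * t := sq_sqrt (by linarith)
  have hpos : 0 < 1 + √(1 - 12 * t) := by positivity
  rw [Tfun]
  generalize √(1 - 12 * t) = s at *
  field_simp
  linear_combination (-3 * (1 - s)) * hs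

lemma one_sub_smaller_root_eq_sqrt_mul_gapRatio {s : ℝ} (hs0 : 0 ≤ s) (hs1 : s < 1) :
    let a := (1 - s) / (3 * (1 + s))
    (√((1 - 3 * a) * (1 + a)) - (1 - 3 * a)) / (2 * a) = √s * gapRatio s := by
  intro a
  have h1 : 0 < 1 - s := by linarith
  have h2 : 0 < 1 + s := by linarith
  have hs : √s ^ 2 = s := sq_sqrt hs0
  have hdisc : (1 - 3 * a) * (1 + a) = s * ((8 + 4 * s) / 3) / (1 + s) ^ 2 := by
    simp only [a]
    field_simp
    ring
  rw [hdisc, sqrt_div (by positivity), sqrt_sq h2.le, sqrt_mul hs0, gapRatio]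
  simp only [a]
  field_simp
  linear_combination 2 * hs

lemma one_sub_Ufun {t : ℝ} (ht : 0 < t) (ht' : t ≤ 1 / 12) :
    1 - Ufun t = √(√(1 - 12 * t)) * gapRatio (√(1 - 12 * t)) := by
  have hs1 : √(1 - 12 * t) < 1 := by
    rw [sqrt_lt' one_pos]
    linarith
  have ha : t * Tfun t ^ 2 ≠ 0 := by
    rw [mul_Tfun_sq ht.ne' ht']
    have : 0 < 1 - √(1 - 12 * t) := by linarith
    positivity
  rw [Ufun, show 4 * t ^ 2 * Tfun t ^ 4 = 4 * (t * Tfun t ^ 2) ^ 2 by ring, mul_assoc,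
    one_sub_smaller_root ha, mul_Tfun_sq ht.ne' ht']
  exact one_sub_smaller_root_eq_sqrt_mul_gapRatio (sqrt_nonneg _) hs1

lemma rpow_one_fourth_eq_sqrt_sqrt {x : ℝ} (hx : 0 ≤ x) : x ^ ((1 : ℝ) / 4) = √(√x) := by
  rw [show (1 : ℝ) / 4 = 1 / 2 / 2 by norm_num, rpow_div_two_eq_sqrt _ hx, sqrt_eq_rpow (√x)]

lemma div_rpow_one_fourth_eq_gapRatio {t : ℝ} (ht : 0 < t) (ht' : t < 1 / 12) :
    (1 - Ufun t) / (1 - 12 * t) ^ ((1 : ℝ) / 4) = gapRatio (√(1 - 12 * t)) := by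
  have hq : 0 < √(√(1 - 12 * t)) := sqrt_pos.2 (sqrt_pos.2 (by linarith))
  rw [one_sub_Ufun ht ht'.le, rpow_one_fourth_eq_sqrt_sqrt (by linarith),
    mul_div_cancel_left₀ _ hq.ne']

/-- As `t → (1/12)⁻`, the quotient
`(1 - U(t)) / (1 - 12t)^(1/4)` tends to `√6`. -/
theorem stmt_15 :
    Filter.Tendsto (fun t : ℝ => (1 - Ufun t) / (1 - 12 * t) ^ ((1 : ℝ) / 4))
      (nhdsWithin (1 / 12 : ℝ) (Set.Iio (1 / 12)))
      (nhds (Real.sqrt 6)) := by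
  have hs : Tendsto (fun t : ℝ => √(1 - 12 * t)) (𝓝[<] (1 / 12)) (𝓝 0) := by
    have h : Tendsto (fun t : ℝ => √(1 - 12 * t)) (𝓝 (1 / 12)) (𝓝 (√(1 - 12 * (1 / 12)))) :=
      (by fun_prop : Continuous fun t : ℝ => √(1 - 12 * t)).tendsto _
    norm_num at h
    exact h.mono_left nhdsWithin_le_nhds
  have hlim : Tendsto (fun t => gapRatio (√(1 - 12 * t))) (𝓝[<] (1 / 12)) (𝓝 (√6)) :=
    gapRatio_zero ▸ continuousAt_gapRatio_zero.tendsto.comp hs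
  refine hlim.congr' ?_
  have hpos : ∀ᶠ t in 𝓝[<] (1 / 12 : ℝ), 0 < t :=
    eventually_nhdsWithin_of_eventually_nhds (eventually_gt_nhds (by norm_num))
  filter_upwards [self_mem_nhdsWithin, hpos] with t ht' ht
  exact (div_rpow_one_fourth_eq_gapRatio ht ht').symm
end
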